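/- arXiv:1307.3533 — 3 statements merged into one kernel-verified Lean document; each statement's English description precedes it below -/
import Mathlib

section
/- If E is a maximally irredundant subset of a boolean algebra B, then the subalgebra generated by E is dense in B. -/
open Cardinal Set

universe u
variable {B : Type u} [BooleanAlgebra B]

/-- Membership in the boolean subalgebra of `B` generated by `E`. -/
inductive InGen (E : Set B) : B → Prop
  | base {a : B} : a ∈ E → InGen E a
  | bot : InGen E ⊥
  | compl {a : B} : InGen E a → InGen E aᶜ
  | sup {a b : B} : InGen E a → InGen E b → InGen E (a ⊔ b)

/-- `E` is irredundant. -/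
def Irred (E : Set B) : Prop := ∀ a ∈ E, ¬ InGen (E \ {a}) a

/-- `E` is independent. -/
def Indep (E : Set B) : Prop :=
  ∀ F G : Finset B, ↑F ⊆ E → ↑G ⊆ E → Disjoint F G →
    F.inf id ⊓ G.inf (fun a => aᶜ) ≠ ⊥

/-- `S` is dense in `B`. -/
def DenseSub (S : Set B) : Prop := ∀ b : B, b ≠ ⊥ → ∃ d ∈ S, d ≠ ⊥ ∧ d ≤ b

/-- pi-weight of `B`: least size of a dense subset. -/
noncomputable def piWeight (B : Type u) [BooleanAlgebra B] : Cardinal :=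
  sInf {c | ∃ S : Set B, DenseSub S ∧ #S = c}

/-- `E` is a maximal irredundant subset of `B`. -/
def MaxIrred (E : Set B) : Prop :=
  Irred E ∧ ∀ b : B, b ∉ E → ¬ Irred (insert b E)

/-- least size of a maximal irredundant subset of `B`. -/
noncomputable def irrMM (B : Type u) [BooleanAlgebra B] : Cardinal :=
  sInf {c | ∃ E : Set B, MaxIrred E ∧ #E = c}

/-!
Let `b ≠ ⊥` lie outside the subalgebra `⟨E⟩`. Since `insert b E` is redundant, some `a ∈ E` lies in
`⟨insert b (E \ {a})⟩`; below `bᶜ` adjoining `b` changes nothing, so `a ⊓ bᶜ = y ⊓ bᶜ` for some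
`y ∈ ⟨E \ {a}⟩`. Irredundance of `E` gives `a ≠ y`, and `a ∆ y` is a nonzero element of `⟨E⟩`
below `b`.
-/

open scoped symmDiff

namespace InGen

variable {S T : Set B} {a b c : B}

lemma mono (hST : S ⊆ T) (h : InGen S a) : InGen T a := by
  induction h with
  | base ha => exact base (hST ha)
  | bot => exact bot
  | compl _ ih => exact compl ih
  | sup _ _ iha ihb => exact sup iha ihb

lemma inf (ha : InGen S a) (hb : InGen S b) : InGen S (a ⊓ b) := by
  simpa using (sup ha.compl hb.compl).compl

lemma symmDiff (ha : InGen S a) (hb : InGen S b) : InGen S (a ∆ b) := by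
  rw [symmDiff_eq]
  exact sup (ha.inf hb.compl) (hb.inf ha.compl)

lemma exists_inf_eq_of_insert (h : InGen (insert b S) a) (hbc : Disjoint b c) :
    ∃ y, InGen S y ∧ a ⊓ c = y ⊓ c := by
  induction h with
  | base ha =>
    rcases ha with rfl | ha
    · exact ⟨⊥, bot, by simpa using hbc.eq_bot⟩
    · exact ⟨_, base ha, rfl⟩
  | bot => exact ⟨⊥, bot, rfl⟩
  | @compl a _ ih =>
    obtain ⟨y, hy, hay⟩ := ih
    refine ⟨yᶜ, hy.compl, ?_⟩
    calc aᶜ ⊓ c = c \ (a ⊓ c) := by rw [sdiff_inf_self_right, _root_.sdiff_eq, inf_comm]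
      _ = c \ (y ⊓ c) := by rw [hay]
      _ = yᶜ ⊓ c := by rw [sdiff_inf_self_right, _root_.sdiff_eq, inf_comm]
  | sup _ _ ih₁ ih₂ =>
    obtain ⟨y₁, hy₁, h₁⟩ := ih₁
    obtain ⟨y₂, hy₂, h₂⟩ := ih₂
    exact ⟨y₁ ⊔ y₂, sup hy₁ hy₂, by rw [inf_sup_right, inf_sup_right, h₁, h₂]⟩

end InGen

lemma symmDiff_le_of_inf_compl_eq {α : Type*} [BooleanAlgebra α] {a b c : α}
    (h : a ⊓ cᶜ = b ⊓ cᶜ) : a ∆ b ≤ c := by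
  rw [← sdiff_eq_bot_iff, _root_.sdiff_eq, inf_symmDiff_distrib_right, h, symmDiff_self]

lemma exists_inf_compl_eq_of_not_irred_insert {E : Set B} {b : B} (hb : ¬ InGen E b)
    (h : ¬ Irred (insert b E)) : ∃ a ∈ E, ∃ y, InGen (E \ {a}) y ∧ a ⊓ bᶜ = y ⊓ bᶜ := by
  obtain ⟨a, ha, hgen⟩ : ∃ a ∈ insert b E, InGen (insert b E \ {a}) a := by
    simpa only [Irred, not_forall, not_not, exists_prop] using h
  rcases ha with rfl | ha
  · exact absurd (hgen.mono (sdiff_singleton_subset_iff.mpr subset_rfl)) hb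
  · have hba : b ≠ a := by rintro rfl; exact hb (.base ha)
    rw [← insert_sdiff_singleton_comm hba] at hgen
    exact ⟨a, ha, hgen.exists_inf_eq_of_insert disjoint_compl_right⟩

theorem dense_of_maxIrred {B : Type u} [BooleanAlgebra B] (E : Set B)
    (h : MaxIrred E) :
    ∀ b : B, b ≠ ⊥ → ∃ d : B, InGen E d ∧ d ≠ ⊥ ∧ d ≤ b := by
  intro b hb
  by_cases hbE : InGen E b
  · exact ⟨b, hbE, hb, le_rfl⟩
  obtain ⟨a, ha, y, hy, hay⟩ :=
    exists_inf_compl_eq_of_not_irred_insert hbE (h.2 b fun hb' => hbE (.base hb'))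
  refine ⟨a ∆ y, (InGen.base ha).symmDiff (hy.mono sdiff_subset), ?_,
    symmDiff_le_of_inf_compl_eq hay⟩
  rw [Ne, symmDiff_eq_bot]
  rintro rfl
  exact h.1 a ha hy
end

section
/- 𝔟_{ω₁} equals the strong reaping number r̂_{ω₁}: the least cardinality of a family R of uncountable subsets of ω₁ such that no nice club C strongly splits R. -/
open Cardinal Set

universe u
variable {B : Type u} [BooleanAlgebra B]

/-- A fixed set of size ℵ₁ with its canonical well-order: "ω₁". -/
noncomputable def W : Type := (Cardinal.aleph 1).ord.ToType

noncomputable instance : LinearOrder W := inferInstanceAs (LinearOrder (Cardinal.aleph 1).ord.ToType)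

/-- The finite-cofinite algebra on ω₁. -/
def finCofin : Set (Set W) := {b | b.Finite ∨ bᶜ.Finite}

/-- `S` is (the underlying set of) a subalgebra of `P(ω₁)`. -/
def IsSubalg (S : Set (Set W)) : Prop :=
  ∅ ∈ S ∧ (∀ a ∈ S, aᶜ ∈ S) ∧ ∀ a ∈ S, ∀ b ∈ S, a ∪ b ∈ S

/-- `E` is a maximal irredundant subset of the subalgebra (with carrier) `Bs`. -/
def MaxIrredIn (Bs E : Set (Set W)) : Prop :=
  E ⊆ Bs ∧ Irred E ∧ ∀ b ∈ Bs, b ∉ E → ¬ Irred (insert b E)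

/-- `Irr_mm` of a subalgebra of `P(ω₁)` with carrier `Bs`. -/
noncomputable def irrMMIn (Bs : Set (Set W)) : Cardinal :=
  sInf {c | ∃ E, MaxIrredIn Bs E ∧ #E = c}

/-- pi-weight of a subalgebra of `P(ω₁)` with carrier `Bs`. -/
noncomputable def piIn (Bs : Set (Set W)) : Cardinal :=
  sInf {c | ∃ S, S ⊆ Bs ∧ (∀ b ∈ Bs, b ≠ ∅ → ∃ d ∈ S, d ≠ ∅ ∧ d ⊆ b) ∧ #S = c}

/-- `C` is a closed unbounded subset of ω₁. -/
def IsClubW (C : Set W) : Prop :=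
  (∀ α : W, ∃ β ∈ C, α < β) ∧
    ∀ α : W, (C ∩ Set.Iio α).Nonempty → IsLUB (C ∩ Set.Iio α) α → α ∈ C

/-- `α` and `β` lie in the same `C`-block. -/
def SameBlock (C : Set W) (α β : W) : Prop := ∀ γ ∈ C, (γ ≤ α ↔ γ ≤ β)

/-- `C` is a nice club: all of its blocks are infinite. -/
def NiceClub (C : Set W) : Prop := IsClubW C ∧ ∀ α : W, {β | SameBlock C α β}.Infinite

/-- `b` is a union of `C`-blocks. -/
def BlockUnion (C : Set W) (b : Set W) : Prop :=
  ∀ α β : W, SameBlock C α β → (α ∈ b ↔ β ∈ b)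

/-- `b` is blockish for `C`: both `b` and its complement are unions of ℵ₁ many `C`-blocks. -/
def Blockish (C : Set W) (b : Set W) : Prop :=
  BlockUnion C b ∧ ¬ b.Countable ∧ ¬ bᶜ.Countable

/-- eventual domination: `f α ≤ g α` except on a set of size `< ℵ₁`. -/
def EvDom (f g : W → W) : Prop := {α | ¬ f α ≤ g α}.Countable

/-- the bounding number 𝔟_{ω₁}. -/
noncomputable def bW : Cardinal :=
  sInf {c | ∃ F : Set (W → W), (∀ g, ∃ f ∈ F, ¬ EvDom f g) ∧ #F = c}

/-- the dominating number 𝔡_{ω₁}. -/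
noncomputable def dW : Cardinal :=
  sInf {c | ∃ F : Set (W → W), (∀ g, ∃ f ∈ F, EvDom g f) ∧ #F = c}

/-- `T` splits `X`. -/
def Splits (T X : Set W) : Prop := ¬ (X ∩ T).Countable ∧ ¬ (X \ T).Countable

/-- the reaping number 𝔯_{ω₁}. -/
noncomputable def rW : Cardinal :=
  sInf {c | ∃ R : Set (Set W), (∀ X ∈ R, ¬ X.Countable) ∧
    (∀ T : Set W, ∃ X ∈ R, ¬ Splits T X) ∧ #R = c}

/-- the nice club `C` strongly splits `R`. -/
def StrSplits (C : Set W) (R : Set (Set W)) : Prop :=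
  ∀ b : Set W, Blockish C b → ∀ X ∈ R, Splits b X

/-- the strong reaping number r̂_{ω₁}. -/
noncomputable def rHatW : Cardinal :=
  sInf {c | ∃ R : Set (Set W), (∀ X ∈ R, ¬ X.Countable) ∧
    (∀ C : Set W, NiceClub C → ¬ StrSplits C R) ∧ #R = c}

/-- a subalgebra of `P(ω₁)` is dichotomous iff none of its members is countably infinite. -/
def Dichot (Bs : Set (Set W)) : Prop := ∀ b ∈ Bs, ¬ (b.Countable ∧ b.Infinite)

/-!
Given an unbounded family `F`, the clubs of closure points of (strictly increasing majorants of)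
the members of `F` form a strongly reaping family: if a nice club `C` strongly split all of them,
each of them would meet all but countably many `C`-blocks, and then every `f ∈ F` would be
eventually dominated by `α ↦ next C (next C α)`.

Conversely, given a strongly reaping family `R`, the functions `next X` (`X ∈ R`) form an unbounded
family: for any `g`, the club of closure points of `g` is nice, so some blockish `b` has `X ∩ b`
(or `X \ b`) countable. At each of the uncountably many club points `v ∈ b` beyond that countable
set, `next X v` cannot stay in the block of `v`, so it lies above the next club point, and thus
above `g v`.
-/

noncomputable instance : WellFoundedLT W :=
  inferInstanceAs (WellFoundedLT (aleph 1).ord.ToType)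

instance : Nonempty W :=
  Ordinal.nonempty_toType_iff.2 (ord_pos.2 (aleph_pos 1)).ne'

noncomputable instance : ConditionallyCompleteLinearOrderBot W :=
  @WellFoundedLT.conditionallyCompleteLinearOrderBot W _ (WellFoundedLT.toOrderBot W) _

namespace W

lemma mk_eq_aleph_one : #W = ℵ₁ :=
  (mk_toType _).trans (card_ord _)

lemma countable_Iio (α : W) : (Iio α).Countable := by
  rw [← le_aleph0_iff_set_countable, ← lt_aleph_one_iff, ← mk_eq_aleph_one]
  exact mk_Iio_lt α (by rw [mk_eq_aleph_one]; exact (Ordinal.type_toType _).symm)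

lemma countable_Iic (α : W) : (Iic α).Countable := by
  rw [← Iio_insert]
  exact (countable_Iio α).insert α

lemma not_countable_univ : ¬ (univ : Set W).Countable := by
  rw [← le_aleph0_iff_set_countable, mk_univ, mk_eq_aleph_one]
  exact aleph0_lt_aleph_one.not_ge

lemma countable_iff_bddAbove {s : Set W} : s.Countable ↔ BddAbove s := by
  refine ⟨fun hs => by_contra fun hbdd => not_countable_univ ?_,
    fun ⟨β, hβ⟩ => (countable_Iic β).mono hβ⟩
  refine (hs.biUnion fun x _ => countable_Iio x).mono fun β _ => ?_
  obtain ⟨x, hx, hβx⟩ := not_bddAbove_iff.1 hbdd β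
  exact mem_biUnion hx hβx

lemma not_countable_iff_forall_exists_gt {s : Set W} : ¬ s.Countable ↔ ∀ β, ∃ x ∈ s, β < x :=
  countable_iff_bddAbove.not.trans not_bddAbove_iff

instance : NoMaxOrder W :=
  ⟨fun α => (not_countable_iff_forall_exists_gt.1 not_countable_univ α).imp fun _ h => h.2⟩

end W

open W

noncomputable def next (s : Set W) (α : W) : W := sInf (s ∩ Ioi α)

section Next

variable {s : Set W} {α x : W}

lemma next_mem_inter (hs : ∀ β, ∃ x ∈ s, β < x) (α : W) : next s α ∈ s ∩ Ioi α :=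
  csInf_mem (hs α)

lemma next_mem (hs : ∀ β, ∃ x ∈ s, β < x) (α : W) : next s α ∈ s :=
  (next_mem_inter hs α).1

lemma lt_next (hs : ∀ β, ∃ x ∈ s, β < x) (α : W) : α < next s α :=
  (next_mem_inter hs α).2

lemma next_le (hx : x ∈ s) (hαx : α < x) : next s α ≤ x :=
  csInf_le' ⟨hx, hαx⟩

end Next

section Blocks

variable {C b : Set W} {α β : W}

lemma sameBlock_equivalence (C : Set W) : Equivalence (SameBlock C) :=
  ⟨fun _ _ _ => Iff.rfl, fun h γ hγ => (h γ hγ).symm, fun h h' γ hγ => (h γ hγ).trans (h' γ hγ)⟩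

lemma SameBlock.lt_next (hC : ∀ β, ∃ x ∈ C, β < x) (h : SameBlock C α β) : β < next C α :=
  not_le.1 fun hle => (_root_.lt_next hC α).not_ge ((h _ (next_mem hC α)).2 hle)

lemma sameBlock_of_le_of_lt_next (hαβ : α ≤ β) (hβ : β < next C α) : SameBlock C α β :=
  fun _ hγ => ⟨fun h => h.trans hαβ,
    fun h => not_lt.1 fun hαγ => ((next_le hγ hαγ).trans h).not_gt hβ⟩

lemma Blockish.compl (hb : Blockish C b) : Blockish C bᶜ :=
  ⟨fun α β h => not_congr (hb.1 α β h), hb.2.2, by rw [compl_compl]; exact hb.2.1⟩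

lemma exists_mem_sameBlock (hC : IsClubW C) {c ρ : W} (hc : c ∈ C) (hcρ : c ≤ ρ) :
    ∃ v ∈ C, SameBlock C v ρ := by
  have hne : (C ∩ Iic ρ).Nonempty := ⟨c, hc, hcρ⟩
  have hbdd : BddAbove (C ∩ Iic ρ) := ⟨ρ, fun _ h => h.2⟩
  set v := sSup (C ∩ Iic ρ)
  have hle : ∀ x ∈ C, x ≤ ρ → x ≤ v := fun x hx hxρ => le_csSup hbdd ⟨hx, hxρ⟩
  have hvρ : v ≤ ρ := csSup_le hne fun _ h => h.2
  have hvC : v ∈ C := by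
    by_contra hv
    have hCv : C ∩ Iio v = C ∩ Iic ρ := ext fun x =>
      ⟨fun h => ⟨h.1, h.2.le.trans hvρ⟩,
        fun h => ⟨h.1, (hle x h.1 h.2).lt_of_ne (ne_of_mem_of_not_mem h.1 hv)⟩⟩
    exact hv (hC.2 v (hCv ▸ hne) (hCv ▸ isLUB_csSup hne hbdd))
  exact ⟨v, hvC, fun γ hγ => ⟨fun h => h.trans hvρ, hle γ hγ⟩⟩

lemma BlockUnion.not_countable_inter (hC : IsClubW C) (hb : BlockUnion C b)
    (hbc : ¬ b.Countable) : ¬ (C ∩ b).Countable := by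
  intro hCb
  obtain ⟨c, hc, -⟩ := hC.1 (Classical.arbitrary W)
  refine hbc (((countable_Iio c).union (hCb.biUnion fun v _ => countable_Iio (next C v))).mono
    fun ρ hρ => ?_)
  rcases lt_or_ge ρ c with hρc | hcρ
  · exact Or.inl hρc
  obtain ⟨v, hv, hvρ⟩ := exists_mem_sameBlock hC hc hcρ
  exact Or.inr (mem_biUnion ⟨hv, (hb v ρ hvρ).2 hρ⟩ (hvρ.lt_next hC.1))

end Blocks

noncomputable def majorant (g : W → W) (α : W) : W :=
  sInf {β | α < β ∧ ∀ γ ≤ α, g γ < β}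

section Majorant

variable {g : W → W} {α β γ : W}

lemma majorant_spec (g : W → W) (α : W) :
    α < majorant g α ∧ ∀ γ ≤ α, g γ < majorant g α := by
  obtain ⟨β, hβ⟩ := countable_iff_bddAbove.1 (((countable_Iic α).image g).insert α)
  obtain ⟨β', hββ'⟩ := exists_gt β
  have hne : {β | α < β ∧ ∀ γ ≤ α, g γ < β}.Nonempty :=
    ⟨β', (hβ (mem_insert α _)).trans_lt hββ',
      fun γ hγ => (hβ (mem_insert_of_mem _ (mem_image_of_mem g hγ))).trans_lt hββ'⟩
  exact csInf_mem hne

lemma lt_majorant (g : W → W) (α : W) : α < majorant g α :=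
  (majorant_spec g α).1

lemma monotone_majorant (g : W → W) : Monotone (majorant g) := fun _ _ h =>
  csInf_le' ⟨h.trans_lt (lt_majorant g _), fun γ hγ => (majorant_spec g _).2 γ (hγ.trans h)⟩

lemma strictMono_iterate_majorant (g : W → W) (α : W) :
    StrictMono fun n => (majorant g)^[n] α :=
  strictMono_nat_of_lt_succ fun n => by
    rw [Function.iterate_succ_apply']
    exact lt_majorant g _

/-- Closure points of `majorant g` rather than of `g`: as `majorant g` is strictly inflationary,
every block of this club is infinite. -/
def clubOf (g : W → W) : Set W := {α | ∀ β < α, majorant g β < α}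

lemma apply_lt_of_mem_clubOf (hα : α ∈ clubOf g) (hβ : β < α) : g β < α :=
  ((majorant_spec g β).2 β le_rfl).trans (hα β hβ)

lemma iterate_majorant_lt_of_mem_clubOf (hγ : γ ∈ clubOf g) (hα : α < γ) :
    ∀ n, (majorant g)^[n] α < γ
  | 0 => hα
  | n + 1 => by
    rw [Function.iterate_succ_apply']
    exact hγ _ (iterate_majorant_lt_of_mem_clubOf hγ hα n)

lemma exists_mem_clubOf_gt (g : W → W) (α : W) : ∃ γ ∈ clubOf g, α < γ := by
  set a : ℕ → W := fun n => (majorant g)^[n] α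
  have hbdd : BddAbove (range a) := countable_iff_bddAbove.1 (countable_range a)
  have ha : ∀ n, a n < sSup (range a) := fun n =>
    (strictMono_iterate_majorant g α n.lt_succ_self).trans_le
      (le_csSup hbdd (mem_range_self (n + 1)))
  refine ⟨sSup (range a), fun β hβ => ?_, ha 0⟩
  obtain ⟨_, ⟨n, rfl⟩, hβn⟩ := exists_lt_of_lt_csSup (range_nonempty a) hβ
  calc majorant g β ≤ majorant g (a n) := monotone_majorant g hβn.le
    _ = a (n + 1) := (Function.iterate_succ_apply' _ _ _).symm
    _ < sSup (range a) := ha (n + 1)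

lemma not_countable_clubOf (g : W → W) : ¬ (clubOf g).Countable :=
  not_countable_iff_forall_exists_gt.2 (exists_mem_clubOf_gt g)

lemma isClubW_clubOf (g : W → W) : IsClubW (clubOf g) := by
  refine ⟨exists_mem_clubOf_gt g, fun α _ hlub β hβ => ?_⟩
  obtain ⟨γ, ⟨hγ, hγα⟩, hβγ⟩ := (lt_isLUB_iff hlub).1 hβ
  exact (hγ β hβγ).trans hγα

lemma niceClub_clubOf (g : W → W) : NiceClub (clubOf g) := by
  have hC := (isClubW_clubOf g).1
  refine ⟨isClubW_clubOf g, fun α => infinite_of_injective_forall_mem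
    (strictMono_iterate_majorant g α).injective fun n => ?_⟩
  exact sameBlock_of_le_of_lt_next ((strictMono_iterate_majorant g α).monotone n.zero_le)
    (iterate_majorant_lt_of_mem_clubOf (next_mem hC α) (lt_next hC α) n)

end Majorant

section Splitting

variable {C D X b : Set W} {f g : W → W}

lemma countable_of_blockUnion_of_disjoint (hD : ¬ D.Countable)
    (hsplit : ∀ b, Blockish C b → Splits b D) {A : Set W} (hA : BlockUnion C A)
    (hAD : Disjoint D A) : A.Countable := by
  by_contra hAc
  have hb : Blockish C A := ⟨hA, hAc, fun h => hD (h.mono hAD.subset_compl_right)⟩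
  exact (hsplit A hb).1 (hAD.inter_eq ▸ countable_empty)

lemma evDom_next_next (hC : ∀ β, ∃ x ∈ C, β < x) (hfD : ∀ e ∈ D, ∀ β < e, f β < e)
    (hD : ¬ D.Countable) (hsplit : ∀ b, Blockish C b → Splits b D) :
    EvDom f fun α => next C (next C α) := by
  have hblock := sameBlock_equivalence C
  set A := {α | ∀ β, SameBlock C α β → β ∉ D}
  have hA : BlockUnion C A := fun α β h =>
    ⟨fun hα _ h' => hα _ (hblock.trans h h'),
      fun hβ _ h' => hβ _ (hblock.trans (hblock.symm h) h')⟩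
  have hAD : Disjoint D A := disjoint_left.2 fun e he heA => heA e (hblock.refl e) he
  obtain ⟨δ, hδ⟩ := countable_iff_bddAbove.1 (countable_of_blockUnion_of_disjoint hD hsplit hA hAD)
  refine Countable.mono (fun α hα => mem_Iic.2 (not_lt.1 fun hδα => hα ?_)) (countable_Iic δ)
  have hcA : next C α ∉ A := fun h => (hδα.trans (lt_next hC α)).not_ge (hδ h)
  obtain ⟨e, hce, heD⟩ : ∃ e, SameBlock C (next C α) e ∧ e ∈ D := by
    simpa [A] using hcA
  have hαe : α < e := (lt_next hC α).trans_le ((hce _ (next_mem hC α)).1 le_rfl)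
  exact ((hfD e heD α hαe).trans (hce.lt_next hC)).le

lemma not_evDom_next (hC : IsClubW C) (hgC : ∀ γ ∈ C, ∀ β < γ, g β < γ) (hb : Blockish C b)
    (hX : ¬ X.Countable) (hXb : (X ∩ b).Countable) : ¬ EvDom (next X) g := by
  have hX' := not_countable_iff_forall_exists_gt.1 hX
  obtain ⟨δ, hδ⟩ := countable_iff_bddAbove.1 hXb
  have hCb := not_countable_iff_forall_exists_gt.1 (hb.1.not_countable_inter hC hb.2.1)
  refine not_countable_iff_forall_exists_gt.2 fun β => ?_
  obtain ⟨v, ⟨hvC, hvb⟩, hv⟩ := hCb (max β δ)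
  refine ⟨v, ?_, (le_max_left β δ).trans_lt hv⟩
  have hnext : next C v ≤ next X v := by
    by_contra! hlt
    have hsame := sameBlock_of_le_of_lt_next (lt_next hX' v).le hlt
    have hmem : next X v ∈ X ∩ b := ⟨next_mem hX' v, (hb.1 v _ hsame).1 hvb⟩
    exact (hδ hmem).not_gt (((le_max_right β δ).trans_lt hv).trans (lt_next hX' v))
  exact ((hgC _ (next_mem hC.1 v) v (lt_next hC.1 v)).trans_le hnext).not_ge

end Splitting

def IsUnboundedFamily (F : Set (W → W)) : Prop := ∀ g, ∃ f ∈ F, ¬ EvDom f g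

def IsStrongReapingFamily (R : Set (Set W)) : Prop :=
  (∀ X ∈ R, ¬ X.Countable) ∧ ∀ C, NiceClub C → ¬ StrSplits C R

lemma IsUnboundedFamily.isStrongReapingFamily_image_clubOf {F : Set (W → W)}
    (hF : IsUnboundedFamily F) : IsStrongReapingFamily (clubOf '' F) := by
  refine ⟨fun _ ⟨f, _, hX⟩ => hX ▸ not_countable_clubOf f, fun C hC hsplit => ?_⟩
  obtain ⟨f, hf, hndom⟩ := hF fun α => next C (next C α)
  exact hndom (evDom_next_next hC.1.1 (fun _ he _ => apply_lt_of_mem_clubOf he)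
    (not_countable_clubOf f) fun b hb => hsplit b hb _ (mem_image_of_mem _ hf))

lemma IsStrongReapingFamily.isUnboundedFamily_image_next {R : Set (Set W)}
    (hR : IsStrongReapingFamily R) : IsUnboundedFamily (next '' R) := by
  intro g
  obtain ⟨b, hb, X, hXR, hsplit⟩ : ∃ b, Blockish (clubOf g) b ∧ ∃ X ∈ R, ¬ Splits b X := by
    simpa [StrSplits] using hR.2 _ (niceClub_clubOf g)
  refine ⟨next X, mem_image_of_mem _ hXR, ?_⟩
  have hgC : ∀ γ ∈ clubOf g, ∀ β < γ, g β < γ := fun _ hγ _ => apply_lt_of_mem_clubOf hγ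
  rcases not_and_or.1 hsplit with h | h
  · exact not_evDom_next (isClubW_clubOf g) hgC hb (hR.1 X hXR) (not_not.1 h)
  · exact not_evDom_next (isClubW_clubOf g) hgC hb.compl (hR.1 X hXR) (not_not.1 h)

theorem bW_eq_rHatW : bW = rHatW := by
  refine csInf_eq_csInf_of_forall_exists_le ?_ ?_
  · rintro _ ⟨F, hF, rfl⟩
    obtain ⟨hR, hR'⟩ := IsUnboundedFamily.isStrongReapingFamily_image_clubOf hF
    exact ⟨_, ⟨_, hR, hR', rfl⟩, mk_image_le⟩
  · rintro _ ⟨R, hR, hR', rfl⟩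
    exact ⟨_, ⟨_, IsStrongReapingFamily.isUnboundedFamily_image_next ⟨hR, hR'⟩, rfl⟩, mk_image_le⟩
end

section
/- Let A ⊆ B ⊆ P(ω₁) with B dichotomous, and let b ⊆ ω₁. Then the subalgebra generated by B ∪ {b} is dichotomous if and only if for all u ∈ B, u ∩ b is not countably infinite and u ∩ b' is not countably infinite. -/
open Cardinal Set

universe u
variable {B : Type u} [BooleanAlgebra B]

/-! The algebra generated by `Bs ∪ {b}` consists of the sets `(u ∩ b) ∪ (v ∩ bᶜ)` with
`u, v ∈ Bs`, and such a union is countably infinite exactly when one of its two pieces is. -/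

theorem InGen.inf_s16 {E : Set B} {a c : B} (ha : InGen E a) (hc : InGen E c) :
    InGen E (a ⊓ c) := by
  simpa using (ha.compl.sup hc.compl).compl

section

variable {α : Type*}

theorem InGen.exists_eq_inter_union_inter_compl {S : Set (Set α)} (hempty : ∅ ∈ S)
    (hcompl : ∀ a ∈ S, aᶜ ∈ S) (hunion : ∀ a ∈ S, ∀ c ∈ S, a ∪ c ∈ S) {b x : Set α}
    (hx : InGen (S ∪ {b}) x) : ∃ u ∈ S, ∃ v ∈ S, x = u ∩ b ∪ v ∩ bᶜ := by
  induction hx with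
  | base ha =>
    rcases ha with ha | rfl
    · exact ⟨_, ha, _, ha, (inter_union_compl _ _).symm⟩
    · exact ⟨univ, by simpa using hcompl ∅ hempty, ∅, hempty, by simp⟩
  | bot => exact ⟨∅, hempty, ∅, hempty, by simp⟩
  | compl _ ih =>
    obtain ⟨u, hu, v, hv, rfl⟩ := ih
    refine ⟨uᶜ, hcompl u hu, vᶜ, hcompl v hv, ?_⟩
    ext t
    by_cases ht : t ∈ b <;> simp [ht]
  | sup _ _ iha ihc =>
    obtain ⟨u, hu, v, hv, rfl⟩ := iha
    obtain ⟨u', hu', v', hv', rfl⟩ := ihc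
    refine ⟨u ∪ u', hunion u hu u' hu', v ∪ v', hunion v hv v' hv', ?_⟩
    ext t
    by_cases ht : t ∈ b <;> simp [ht]

theorem countable_infinite_or_of_union {s t : Set α} (h : (s ∪ t).Countable ∧ (s ∪ t).Infinite) :
    (s.Countable ∧ s.Infinite) ∨ (t.Countable ∧ t.Infinite) := by
  obtain ⟨hc, hi⟩ := h
  rw [countable_union] at hc
  rcases infinite_union.mp hi with hs | ht
  exacts [.inl ⟨hc.1, hs⟩, .inr ⟨hc.2, ht⟩]

end

theorem dichot_gen_iff_general (Bs : Set (Set W)) (hsub : IsSubalg Bs) (b : Set W) :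
    Dichot {x : Set W | InGen (Bs ∪ {b}) x} ↔
      ∀ u ∈ Bs, ¬ ((u ∩ b).Countable ∧ (u ∩ b).Infinite) ∧
        ¬ ((u ∩ bᶜ).Countable ∧ (u ∩ bᶜ).Infinite) := by
  constructor
  · intro hdich u hu
    have hu' : InGen (Bs ∪ {b}) u := .base (.inl hu)
    have hb : InGen (Bs ∪ {b}) b := .base (.inr rfl)
    exact ⟨hdich _ (hu'.inf_s16 hb), hdich _ (hu'.inf_s16 hb.compl)⟩
  · intro h x hx hx'
    obtain ⟨u, hu, v, hv, rfl⟩ :=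
      hx.exists_eq_inter_union_inter_compl hsub.1 hsub.2.1 hsub.2.2
    rcases countable_infinite_or_of_union hx' with huc | hvc
    exacts [(h u hu).1 huc, (h v hv).2 hvc]

theorem dichot_gen_iff (Bs : Set (Set W)) (hsub : IsSubalg Bs)
    (hA : finCofin ⊆ Bs) (hdich : Dichot Bs) (b : Set W) :
    Dichot {x : Set W | InGen (Bs ∪ {b}) x} ↔
      ∀ u ∈ Bs, ¬ ((u ∩ b).Countable ∧ (u ∩ b).Infinite) ∧
        ¬ ((u ∩ bᶜ).Countable ∧ (u ∩ bᶜ).Infinite) :=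
  dichot_gen_iff_general Bs hsub b
end
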